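/- arXiv:2601.16817 — 4 statements merged into one kernel-verified Lean document; each statement's English description precedes it below -/
import Mathlib

section
/- Let H be a Banach space and Y, Z closed subspaces of H such that Z + Y is closed in H. Then the sum of the annihilators Z° + Y° equals the annihilator (Z ∩ Y)° of the intersection. -/
/-- The annihilator (polar set) of a subspace `X` of a normed space `H`, inside the
continuous dual: the set of continuous linear functionals vanishing on `X`. -/
noncomputable def annihilator {H : Type*} [NormedAddCommGroup H] [NormedSpace ℂ H]
    (X : Submodule ℂ H) : Submodule ℂ (H →L[ℂ] ℂ) where
  carrier := {φ | ∀ v ∈ X, φ v = 0}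
  add_mem' := by
    intro a b ha hb v hv
    simp [ha v hv, hb v hv]
  zero_mem' := by intro v hv; simp
  smul_mem' := by
    intro c a ha v hv
    simp [ha v hv]

lemma mem_annihilator {H : Type*} [NormedAddCommGroup H] [NormedSpace ℂ H]
    {X : Submodule ℂ H} {φ : H →L[ℂ] ℂ} : φ ∈ annihilator X ↔ ∀ v ∈ X, φ v = 0 :=
  Iff.rfl

/-- For closed subspaces `Y, Z` of a Banach space `H` with `Z + Y` closed,
`Z° + Y° = (Z ∩ Y)°`. -/
theorem stmt_0 {H : Type*} [NormedAddCommGroup H] [NormedSpace ℂ H] [CompleteSpace H]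
    (Y Z : Submodule ℂ H) (hY : IsClosed (Y : Set H)) (hZ : IsClosed (Z : Set H))
    (hZY : IsClosed ((Z ⊔ Y : Submodule ℂ H) : Set H)) :
    annihilator Z ⊔ annihilator Y = annihilator (Z ⊓ Y) := by
  apply le_antisymm
  · apply sup_le
    · intro φ hφ v hv; exact hφ v hv.1
    · intro φ hφ v hv; exact hφ v hv.2
  · intro φ hφ
    set W : Submodule ℂ H := Z ⊔ Y with hW
    haveI : CompleteSpace Z := hZ.completeSpace_coe
    haveI : CompleteSpace Y := hY.completeSpace_coe
    haveI : CompleteSpace W := hZY.completeSpace_coe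
    -- the sum map `Z × Y → W`
    let Tl : (Z × Y) →ₗ[ℂ] W :=
      { toFun := fun p => ⟨(p.1 : H) + (p.2 : H),
          Submodule.add_mem_sup p.1.2 p.2.2⟩
        map_add' := by intro a b; ext; simp; abel
        map_smul' := by intro c a; ext; simp [smul_add] }
    have hTl : ∀ p : Z × Y, ((Tl p : W) : H) = (p.1 : H) + (p.2 : H) := fun p => rfl
    let T : (Z × Y) →L[ℂ] W := Tl.mkContinuous 2 (by
      intro p
      have h1 : ‖(p.1 : H)‖ ≤ ‖p‖ := norm_fst_le p
      have h2 : ‖(p.2 : H)‖ ≤ ‖p‖ := norm_snd_le p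
      have : ‖Tl p‖ = ‖(p.1 : H) + (p.2 : H)‖ := rfl
      rw [this]
      calc ‖(p.1 : H) + (p.2 : H)‖ ≤ ‖(p.1 : H)‖ + ‖(p.2 : H)‖ := norm_add_le _ _
        _ ≤ ‖p‖ + ‖p‖ := add_le_add h1 h2
        _ = 2 * ‖p‖ := by ring)
    have hTT : ∀ p : Z × Y, T p = Tl p := fun p => rfl
    have hsurj : Function.Surjective T := by
      rintro ⟨w, hw⟩
      rcases Submodule.mem_sup.1 hw with ⟨z, hz, y, hy, hzy⟩
      exact ⟨(⟨z, hz⟩, ⟨y, hy⟩), by ext; exact hzy⟩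
    obtain ⟨C, hC0, hpre⟩ := T.exists_preimage_norm_le hsurj
    choose σ hσ hσn using hpre
    -- the value `φ p.2` only depends on `T p`
    have key : ∀ a b : Z × Y, T a = T b → φ a.2 = φ b.2 := by
      intro a b hab
      have h : (a.1 : H) + (a.2 : H) = (b.1 : H) + (b.2 : H) :=
        congrArg (Subtype.val) hab
      have hmem : ((a.2 : H) - (b.2 : H)) ∈ Z ⊓ Y := by
        constructor
        · have h' : (a.2 : H) - (b.2 : H) = (b.1 : H) - (a.1 : H) := by
            rw [sub_eq_sub_iff_add_eq_add, add_comm]; exact h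
          rw [h']; exact sub_mem b.1.2 a.1.2
        · exact sub_mem a.2.2 b.2.2
      have := hφ _ hmem
      have h2 : φ (a.2 : H) - φ (b.2 : H) = 0 := by rw [← map_sub]; exact this
      exact sub_eq_zero.mp h2
    -- define the functional on W
    let ψl : W →ₗ[ℂ] ℂ :=
      { toFun := fun w => φ ((σ w).2 : H)
        map_add' := by
          intro w w'
          have hT : T (σ w + σ w') = w + w' := by
            rw [map_add, hσ, hσ]
          have := key (σ (w + w')) (σ w + σ w') (by rw [hσ, hT])
          simp only [this]
          show φ (((σ w).2 : H) + ((σ w').2 : H)) = _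
          rw [map_add]
        map_smul' := by
          intro c w
          have hT : T (c • σ w) = c • w := by rw [map_smul, hσ]
          have := key (σ (c • w)) (c • σ w) (by rw [hσ, hT])
          simp only [this]
          show φ (c • ((σ w).2 : H)) = c • φ ((σ w).2 : H)
          rw [map_smul] }
    have hψl : ∀ p : Z × Y, ψl (T p) = φ (p.2 : H) := by
      intro p
      exact key (σ (T p)) p (hσ (T p))
    let ψ : W →L[ℂ] ℂ := ψl.mkContinuous (‖φ‖ * C) (by
      intro w
      have h1 : ‖ψl w‖ ≤ ‖φ‖ * ‖((σ w).2 : H)‖ := φ.le_opNorm _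
      have h2 : ‖((σ w).2 : H)‖ ≤ ‖σ w‖ := norm_snd_le (σ w)
      have h3 : ‖σ w‖ ≤ C * ‖w‖ := hσn w
      calc ‖ψl w‖ ≤ ‖φ‖ * ‖((σ w).2 : H)‖ := h1
        _ ≤ ‖φ‖ * (C * ‖w‖) := by
            apply mul_le_mul_of_nonneg_left (h2.trans h3) (norm_nonneg φ)
        _ = ‖φ‖ * C * ‖w‖ := by ring)
    obtain ⟨g, hg, -⟩ := exists_extension_norm_eq W ψ
    have hgZ : g ∈ annihilator Z := by
      intro z hz
      have hzW : z ∈ W := le_sup_left (α := Submodule ℂ H) hz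
      have : g z = ψ ⟨z, hzW⟩ := hg ⟨z, hzW⟩
      rw [this]
      have hTp : T (⟨z, hz⟩, 0) = ⟨z, hzW⟩ := by ext; simp [hTT, hTl]
      have := hψl (⟨z, hz⟩, 0)
      rw [hTp] at this
      have h' : ψl ⟨z, hzW⟩ = 0 := by simpa using this
      exact h'
    have hgY : φ - g ∈ annihilator Y := by
      intro y hy
      have hyW : y ∈ W := le_sup_right (α := Submodule ℂ H) hy
      have hgy : g y = ψ ⟨y, hyW⟩ := hg ⟨y, hyW⟩
      have hTp : T (0, ⟨y, hy⟩) = ⟨y, hyW⟩ := by ext; simp [hTT, hTl]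
      have h3 := hψl (0, ⟨y, hy⟩)
      rw [hTp] at h3
      have h4 : ψ ⟨y, hyW⟩ = φ y := h3
      show φ y - g y = 0
      rw [hgy, h4, sub_self]
    have hsplit : φ = g + (φ - g) := by abel
    rw [hsplit]
    exact Submodule.add_mem_sup hgZ hgY
end

section
/- Let T : V → V* be Hermitian positive definite on a finite-dimensional complex space, X ⊂ V a subspace with annihilator X° ⊂ V*, and Π := 2 T P − Id where P is the T-orthogonal projection of V onto X composed appropriately so that Π = 2 T R (R* T R)⁻¹ R* − Id with Im(R) = X. Then for any pair (v, p) ∈ V × V*, one has (v ∈ X and p ∈ X°) if and only if −p + i T(v) = Π(p + i T(v)). -/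
/-- Let `T : V → V*` be Hermitian positive definite on `V = ℂⁿ`, `X ⊆ V` a
subspace realized as the image of an injective map `R : W → V`, and
`Π := 2 T R (R* T R)⁻¹ R* − Id`.  Then for any `(v, p) ∈ V × V*`:
`(v ∈ X ∧ p ∈ X°)  ↔  −p + i T v = Π (p + i T v)`. -/
theorem stmt_7 {n m : ℕ}
    (T : (Fin n → ℂ) →ₗ[ℂ] Module.Dual ℂ (Fin n → ℂ))
    (hT_herm : ∀ u v : Fin n → ℂ, T u (star v) = star (T v (star u)))
    (hT_pos : ∀ u : Fin n → ℂ, u ≠ 0 → 0 < (T u (star u)).re ∧ (T u (star u)).im = 0)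
    (R : (Fin m → ℂ) →ₗ[ℂ] (Fin n → ℂ)) (hR : Function.Injective R)
    (X : Submodule ℂ (Fin n → ℂ)) (hRX : LinearMap.range R = X)
    (G : Module.Dual ℂ (Fin m → ℂ) →ₗ[ℂ] (Fin m → ℂ))
    (hG1 : G ∘ₗ (R.dualMap ∘ₗ T ∘ₗ R) = LinearMap.id)
    (hG2 : (R.dualMap ∘ₗ T ∘ₗ R) ∘ₗ G = LinearMap.id) :
    ∀ (v : Fin n → ℂ) (p : Module.Dual ℂ (Fin n → ℂ)),
      (v ∈ X ∧ p ∈ X.dualAnnihilator) ↔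
        -p + Complex.I • T v =
          ((2 : ℂ) • (T ∘ₗ R ∘ₗ G ∘ₗ R.dualMap) - LinearMap.id :
            Module.Dual ℂ (Fin n → ℂ) →ₗ[ℂ] Module.Dual ℂ (Fin n → ℂ))
            (p + Complex.I • T v) := by
  have hT0 : ∀ u, T u = 0 → u = 0 := by
    intro u hu
    by_contra h
    have := (hT_pos u h).1
    rw [hu] at this
    simp at this
  have hTinj : Function.Injective T := by
    intro a b h
    have h1 : T (a - b) = 0 := by rw [map_sub, h, sub_self]
    exact sub_eq_zero.mp (hT0 _ h1)
  have hGw : ∀ u, G (R.dualMap (T (R u))) = u := fun u => congrArg (fun f => f u) hG1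
  have hG2' : ∀ φ, R.dualMap (T (R (G φ))) = φ := fun φ => congrArg (fun f => f φ) hG2
  intro v p
  simp only [LinearMap.sub_apply, LinearMap.smul_apply, LinearMap.comp_apply,
    LinearMap.id_apply]
  constructor
  · rintro ⟨hv, hp⟩
    rw [← hRX] at hv
    obtain ⟨w, rfl⟩ := hv
    have hRp : R.dualMap p = 0 := by
      refine LinearMap.ext fun x => ?_
      exact (Submodule.mem_dualAnnihilator p).mp hp (R x) (hRX ▸ ⟨x, rfl⟩)
    have hA : R.dualMap (p + Complex.I • T (R w)) = Complex.I • R.dualMap (T (R w)) := by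
      rw [map_add, map_smul, hRp, zero_add]
    rw [hA, map_smul, hGw, map_smul, map_smul]
    module
  · intro h
    set q := R.dualMap p with hq
    have key : T (R (G (R.dualMap (p + Complex.I • T v)))) = Complex.I • T v := by
      have h2 : (2:ℂ) • T (R (G (R.dualMap (p + Complex.I • T v)))) =
          (2:ℂ) • (Complex.I • T v) := by
        linear_combination (norm := module) -h
      exact smul_right_injective (Module.Dual ℂ (Fin n → ℂ)) (two_ne_zero (α := ℂ)) h2
    set w := G (R.dualMap (p + Complex.I • T v)) with hw
    have hvX : v = R ((-Complex.I) • w) := by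
      refine (hTinj ?_).symm
      rw [map_smul, map_smul, key, smul_smul]
      simp [Complex.I_mul_I]
    have hvmem : v ∈ X := by rw [← hRX, hvX]; exact ⟨_, rfl⟩
    refine ⟨hvmem, ?_⟩
    have h1 : G (R.dualMap (T v)) = (-Complex.I) • w := by
      rw [hvX]; exact hGw _
    have hsum : w = G q + Complex.I • ((-Complex.I) • w) := by
      conv_lhs => rw [hw]
      simp only [map_add, map_smul]
      rw [h1, hq]
    rw [smul_smul] at hsum
    simp only [mul_neg, Complex.I_mul_I, neg_neg, one_smul] at hsum
    have hGq : G q = 0 := (right_eq_add.mp hsum)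
    have hq0 : q = 0 := by
      have := hG2' q
      rw [hGq] at this
      simpa using this.symm
    rw [Submodule.mem_dualAnnihilator]
    intro x hx
    rw [← hRX] at hx
    obtain ⟨y, rfl⟩ := hx
    exact congrArg (fun f => f y) hq0
end

section
/- Let Π, S : W* → W* be linear operators on a finite-dimensional complex inner product space (W*, ‖·‖) such that Π is an isometry and S is a contraction (‖S q‖ ≤ ‖q‖ for all q). If additionally the inf-sup constant γ := inf_{q ≠ 0} ‖(Id + Π S) q‖ / ‖q‖ is positive, then Id + Π S is invertible and the Richardson iteration q^{n+1} = (1 − β) q^n − β Π S q^n + β b with β = 1/2 converges geometrically to the solution of (Id + Π S) q = b with rate at most sqrt(1 − γ²/4) per iteration. -/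
/-- Let `P` ("Π") be a linear isometry and `S` a linear contraction on a
finite-dimensional complex inner product space, and suppose the inf-sup constant
`γ = inf_{q ≠ 0} ‖(Id + P S) q‖ / ‖q‖` is positive.  Then `Id + P S` is invertible and
the Richardson iteration `q^{n+1} = (1 − β) qⁿ − β P S qⁿ + β b` with `β = 1/2`
converges geometrically to the solution of `(Id + P S) q = b`, with rate at most
`sqrt (1 − γ²/4)` per iteration. -/
theorem stmt_18 {E : Type*} [NormedAddCommGroup E] [InnerProductSpace ℂ E]
    [FiniteDimensional ℂ E]
    (P S : E →ₗ[ℂ] E)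
    (hP : ∀ q : E, ‖P q‖ = ‖q‖) (hS : ∀ q : E, ‖S q‖ ≤ ‖q‖)
    (γ : ℝ) (hγdef : γ = ⨅ q : {q : E // q ≠ 0}, ‖(q : E) + P (S q)‖ / ‖(q : E)‖)
    (hγpos : 0 < γ) :
    Function.Bijective (fun q : E => q + P (S q)) ∧
    ∀ b : E, ∃ qinf : E, qinf + P (S qinf) = b ∧
      ∀ qseq : ℕ → E,
        (∀ n : ℕ, qseq (n + 1) =
            (1 - (1 : ℂ)/2) • qseq n - ((1 : ℂ)/2) • P (S (qseq n)) + ((1 : ℂ)/2) • b) →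
        ∀ n : ℕ, ‖qseq n - qinf‖ ≤ (Real.sqrt (1 - γ ^ 2 / 4)) ^ n * ‖qseq 0 - qinf‖ := by
  have hTnorm : ∀ q : E, ‖P (S q)‖ ≤ ‖q‖ := fun q => (hP (S q)).le.trans (hS q)
  -- lower bound from the infimum
  have hlow : ∀ q : E, γ * ‖q‖ ≤ ‖q + P (S q)‖ := by
    intro q
    rcases eq_or_ne q 0 with rfl | hq
    · simp
    · have hbdd : BddBelow (Set.range fun q : {q : E // q ≠ 0} =>
          ‖(q : E) + P (S q)‖ / ‖(q : E)‖) := by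
        refine ⟨0, ?_⟩
        rintro x ⟨y, rfl⟩
        positivity
      have hle : γ ≤ ‖q + P (S q)‖ / ‖q‖ := by
        rw [hγdef]
        exact ciInf_le hbdd ⟨q, hq⟩
      have hq' : (0 : ℝ) < ‖q‖ := norm_pos_iff.mpr hq
      calc γ * ‖q‖ ≤ (‖q + P (S q)‖ / ‖q‖) * ‖q‖ :=
            mul_le_mul_of_nonneg_right hle hq'.le
        _ = ‖q + P (S q)‖ := div_mul_cancel₀ _ hq'.ne'
  -- the linear map A = Id + P ∘ S
  set A : E →ₗ[ℂ] E := LinearMap.id + P ∘ₗ S with hA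
  have hAapp : ∀ q : E, A q = q + P (S q) := fun q => rfl
  have hinj : Function.Injective A := by
    rw [← LinearMap.ker_eq_bot]
    apply LinearMap.ker_eq_bot'.mpr
    intro q hq
    have h1 := hlow q
    rw [← hAapp, hq, norm_zero] at h1
    have : ‖q‖ ≤ 0 := by nlinarith [norm_nonneg q]
    exact norm_le_zero_iff.mp this
  have hsurj : Function.Surjective A := (LinearMap.injective_iff_surjective).mp hinj
  have hbij : Function.Bijective (fun q : E => q + P (S q)) := by
    have : (fun q : E => q + P (S q)) = A := by
      funext q; exact (hAapp q).symm
    rw [this]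
    exact ⟨hinj, hsurj⟩
  -- key contraction estimate
  have hkey : ∀ q : E, ‖(1 - (1 : ℂ)/2) • q - ((1 : ℂ)/2) • P (S q)‖ ≤
      Real.sqrt (1 - γ ^ 2 / 4) * ‖q‖ := by
    intro q
    rcases eq_or_ne q 0 with rfl | hq
    · simp
    have hq' : (0 : ℝ) < ‖q‖ := norm_pos_iff.mpr hq
    have hpar := parallelogram_law_with_norm ℂ q (P (S q))
    have h1 : γ * ‖q‖ ≤ ‖q + P (S q)‖ := hlow q
    have h2 : ‖P (S q)‖ ≤ ‖q‖ := hTnorm q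
    have h1' : (γ * ‖q‖) * (γ * ‖q‖) ≤ ‖q + P (S q)‖ * ‖q + P (S q)‖ :=
      mul_self_le_mul_self (by positivity) h1
    have h2' : ‖P (S q)‖ * ‖P (S q)‖ ≤ ‖q‖ * ‖q‖ :=
      mul_self_le_mul_self (norm_nonneg _) h2
    have h3 : ‖q - P (S q)‖ ^ 2 ≤ (4 - γ ^ 2) * ‖q‖ ^ 2 := by
      nlinarith [h1', h2', hpar]
    have hrs : (0 : ℝ) ≤ 1 - γ ^ 2 / 4 := by
      nlinarith [sq_nonneg ‖q - P (S q)‖, mul_pos hq' hq']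
    have heq : (1 - (1 : ℂ)/2) • q - ((1 : ℂ)/2) • P (S q)
        = ((1 : ℂ)/2) • (q - P (S q)) := by
      rw [smul_sub]
      norm_num
    rw [heq, norm_smul]
    have hc : ‖((1 : ℂ)/2)‖ = 1/2 := by norm_num
    rw [hc]
    have hsq : (1/2 * ‖q - P (S q)‖) ^ 2 ≤ (Real.sqrt (1 - γ ^ 2 / 4) * ‖q‖) ^ 2 := by
      rw [mul_pow, mul_pow, Real.sq_sqrt hrs]
      nlinarith
    have hL : (0 : ℝ) ≤ 1/2 * ‖q - P (S q)‖ := by positivity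
    have hR : (0 : ℝ) ≤ Real.sqrt (1 - γ ^ 2 / 4) * ‖q‖ := by positivity
    nlinarith [hsq, hL, hR]
  refine ⟨hbij, fun b => ?_⟩
  obtain ⟨qinf, hqinf⟩ := hbij.2 b
  simp only at hqinf
  refine ⟨qinf, hqinf, fun qseq hrec => ?_⟩
  intro n
  induction n with
  | zero => simp
  | succ n ih =>
    have step : qseq (n+1) - qinf =
        (1 - (1 : ℂ)/2) • (qseq n - qinf) - ((1 : ℂ)/2) • P (S (qseq n - qinf)) := by
      rw [hrec n, ← hqinf, map_sub S, map_sub P]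
      module
    have hstep := hkey (qseq n - qinf)
    rw [← step] at hstep
    calc ‖qseq (n+1) - qinf‖ ≤ Real.sqrt (1 - γ ^ 2 / 4) * ‖qseq n - qinf‖ := hstep
      _ ≤ Real.sqrt (1 - γ ^ 2 / 4) * ((Real.sqrt (1 - γ ^ 2 / 4)) ^ n * ‖qseq 0 - qinf‖) :=
          mul_le_mul_of_nonneg_left ih (Real.sqrt_nonneg _)
      _ = (Real.sqrt (1 - γ ^ 2 / 4)) ^ (n+1) * ‖qseq 0 - qinf‖ := by ring
end

section
/- Let Π S be a contraction on a finite-dimensional complex inner product space and suppose Id + Π S is injective. Then the real part of the associated quadratic form satisfies a coercivity bound: inf_{p ≠ 0} Re⟨(Id + Π S) p, p⟩ / ‖p‖² ≥ γ²/2, where γ = inf_{p ≠ 0} ‖(Id + Π S) p‖ / ‖p‖. -/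
open scoped InnerProductSpace

/-- Let `C` (playing the role of `Π S`) be a linear contraction on a
finite-dimensional complex inner product space such that `Id + C` is injective, and let
`γ = inf_{p ≠ 0} ‖(Id + C) p‖ / ‖p‖` be its inf-sup constant.  Then the real part of the
associated quadratic form is coercive:
`Re ⟨(Id + C) p, p⟩ ≥ (γ²/2) ‖p‖²` for all `p`. -/
theorem stmt_19 {E : Type*} [NormedAddCommGroup E] [InnerProductSpace ℂ E]
    [FiniteDimensional ℂ E]
    (C : E →ₗ[ℂ] E)
    (hC : ∀ p : E, ‖C p‖ ≤ ‖p‖)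
    (hinj : Function.Injective (fun p : E => p + C p))
    (γ : ℝ) (hγdef : γ = ⨅ p : {p : E // p ≠ 0}, ‖(p : E) + C p‖ / ‖(p : E)‖) :
    ∀ p : E, γ ^ 2 / 2 * ‖p‖ ^ 2 ≤ (⟪p + C p, p⟫_ℂ).re := by
  intro p
  rcases eq_or_ne p 0 with rfl | hp
  · simp
  have : Nonempty {p : E // p ≠ 0} := ⟨⟨p, hp⟩⟩
  have h1 : ‖p + C p‖ ^ 2 = ‖p‖ ^ 2 + 2 * (⟪p, C p⟫_ℂ).re + ‖C p‖ ^ 2 :=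
    norm_add_sq (𝕜 := ℂ) p (C p)
  have h2 : (⟪p + C p, p⟫_ℂ).re = ‖p‖ ^ 2 + (⟪C p, p⟫_ℂ).re := by
    rw [inner_add_left, Complex.add_re, ← @inner_self_eq_norm_sq ℂ]; rfl
  have h3 : (⟪p, C p⟫_ℂ).re = (⟪C p, p⟫_ℂ).re := by
    rw [← inner_conj_symm, Complex.conj_re]
  have key : ‖p + C p‖ ^ 2 ≤ 2 * (⟪p + C p, p⟫_ℂ).re := by
    nlinarith [hC p, norm_nonneg p, norm_nonneg (C p)]
  have hbdd : BddBelow (Set.range fun p : {p : E // p ≠ 0} => ‖(p : E) + C p‖ / ‖(p : E)‖) := by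
    refine ⟨0, ?_⟩
    rintro x ⟨q, rfl⟩
    exact div_nonneg (norm_nonneg _) (norm_nonneg _)
  have hγle : γ ≤ ‖p + C p‖ / ‖p‖ := by
    rw [hγdef]
    exact ciInf_le hbdd ⟨p, hp⟩
  have hγ0 : 0 ≤ γ := by
    rw [hγdef]
    exact le_ciInf fun q => div_nonneg (norm_nonneg _) (norm_nonneg _)
  have hpn : 0 < ‖p‖ := norm_pos_iff.mpr hp
  have hmul : γ * ‖p‖ ≤ ‖p + C p‖ := by
    rw [← div_mul_cancel₀ ‖p + C p‖ hpn.ne']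
    exact mul_le_mul_of_nonneg_right hγle hpn.le
  nlinarith [mul_le_mul hmul hmul (mul_nonneg hγ0 hpn.le) (norm_nonneg (p + C p))]
end
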